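/- arXiv:2510.18175 — 5 statements merged into one kernel-verified Lean document; each statement's English description precedes it below -/
import Mathlib

section
/- Let k be an infinite field of characteristic 2 and m a positive integer. If α^m + (1 + α)^m = 1 for all α ∈ k, then m is a power of 2. -/
open Polynomial

theorem stmt_1 (k : Type*) [Field k] [Infinite k] [CharP k 2]
    (m : ℕ) (hm : 1 ≤ m)
    (h : ∀ a : k, a ^ m + (1 + a) ^ m = 1) :
    ∃ j : ℕ, m = 2 ^ j := by
  haveI : Fact (Nat.Prime 2) := ⟨Nat.prime_two⟩
  suffices H : ∀ m : ℕ, 1 ≤ m → (∀ a : k, a ^ m + (1 + a) ^ m = 1) → ∃ j : ℕ, m = 2 ^ j from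
    H m hm h
  clear hm h m
  intro m
  induction m using Nat.strong_induction_on with
  | _ m ih =>
    intro hm h
    rcases eq_or_lt_of_le hm with h1 | h2
    · exact ⟨0, h1.symm⟩
    · -- m ≥ 2; first show 2 ∣ m via the polynomial identity
      have hpoly : (X ^ m + (X + 1) ^ m : k[X]) = 1 := by
        apply Polynomial.funext
        intro r
        have := h r
        simp only [eval_add, eval_pow, eval_X, eval_one]
        rw [add_comm r 1]
        simpa using this
      have hcoeff := congrArg (fun p => Polynomial.coeff p (m - 1)) hpoly
      have hne : m - 1 ≠ m := by omega
      have hne0 : m - 1 ≠ 0 := by omega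
      simp only [coeff_add, Polynomial.coeff_X_pow, if_neg hne,
        Polynomial.coeff_X_add_one_pow, coeff_one, if_neg hne0, zero_add] at hcoeff
      have hmk : (m : k) = 0 := by
        rwa [Nat.choose_symm hm, Nat.choose_one_right] at hcoeff
      have hdvd : 2 ∣ m := (CharP.cast_eq_zero_iff k 2 m).mp hmk
      obtain ⟨m', rfl⟩ := hdvd
      have hm' : 1 ≤ m' := by omega
      have h' : ∀ a : k, a ^ m' + (1 + a) ^ m' = 1 := by
        intro a
        have key : (a ^ m' + (1 + a) ^ m') ^ 2 = 1 := by
          rw [add_pow_char]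
          rw [← pow_mul, ← pow_mul, mul_comm m' 2]
          exact h a
        have h0 : (a ^ m' + (1 + a) ^ m' + 1) ^ 2 = 0 := by
          rw [add_pow_char, key, one_pow, CharTwo.add_self_eq_zero]
        have := pow_eq_zero_iff (n := 2) (by norm_num) |>.mp h0
        have := eq_neg_of_add_eq_zero_left this
        rw [this, CharTwo.neg_eq]
      obtain ⟨j, hj⟩ := ih m' (by omega) hm' h'
      exact ⟨j + 1, by rw [hj]; ring⟩
end

section
/- Let G be a finite group, H ≤ G a subgroup, k a field, and W₁, W₂, W₃ finite-dimensional kG-modules. Assume every indecomposable direct summand of Ind_H^G(Res_H W₃) is also (isomorphic to) a direct summand of W₂. Let π : Ind_H^G(Res_H W₂) → W₂ be the canonical (counit) projection. Then the map Hom_G(W₂, Ind_H^G Res_H W₃) ⊗ Hom_G(W₁, Ind_H^G Res_H W₂) → Hom_G(W₁, Ind_H^G Res_H W₃) sending f ⊗ g to f ∘ π ∘ g is surjective. -/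
universe u

section

variable {k : Type u} [Field k] {G : Type u} [Group G] [Fintype G] [DecidableEq G]

/-- The carrier of the representation of `G` induced from a representation `τ` of a
subgroup `H ≤ G` (function model): functions `f : G → W` with `f (g * h) = τ h⁻¹ (f g)`. -/
def IndCarrier (H : Subgroup G) {W : Type u} [AddCommGroup W] [Module k W]
    (τ : Representation k H W) : Submodule k (G → W) where
  carrier := {f | ∀ (g : G) (h : H), f (g * (h : G)) = τ h⁻¹ (f g)}
  add_mem' := by
    intro f₁ f₂ h₁ h₂ g h
    simp only [Pi.add_apply, h₁ g h, h₂ g h, map_add]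
  zero_mem' := by
    intro g h
    simp
  smul_mem' := by
    intro c f hf g h
    simp only [Pi.smul_apply, hf g h, map_smul]

/-- The induced representation of `G` on `IndCarrier H τ`, by right translation. -/
def indRep (H : Subgroup G) {W : Type u} [AddCommGroup W] [Module k W]
    (τ : Representation k H W) : Representation k G (IndCarrier H τ) where
  toFun σ :=
    { toFun := fun f => ⟨fun g => (f : G → W) (σ⁻¹ * g), by
        intro g h
        simpa [mul_assoc] using f.2 (σ⁻¹ * g) h⟩
      map_add' := by intro f₁ f₂; ext g; simp
      map_smul' := by intro c f; ext g; simp }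
  map_one' := by ext f g; simp
  map_mul' := by
    intro σ₁ σ₂
    ext f g
    simp [mul_assoc]

/-- The canonical counit projection `Ind_H^G Res_H W → W`,
`f ↦ ∑_{gH ∈ G/H} ρ(g) (f g)` over coset representatives. -/
noncomputable def counitProj (H : Subgroup G) {W : Type u} [AddCommGroup W] [Module k W]
    (ρ : Representation k G W) :
    IndCarrier H (ρ.comp H.subtype) →ₗ[k] W :=
  letI : Fintype (G ⧸ H) := Fintype.ofFinite _
  {
    toFun := fun f => ∑ c : G ⧸ H, ρ (Quotient.out c) ((f : G → W) (Quotient.out c))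
    map_add' := by
      intro f₁ f₂
      simp [Finset.sum_add_distrib]
    map_smul' := by
      intro c f
      simp [Finset.smul_sum] }

/-- A linear map is `G`-equivariant for representations `ρ`, `ρ'`. -/
def IsEquivariant {V V' : Type u} [AddCommGroup V] [Module k V] [AddCommGroup V'] [Module k V']
    (ρ : Representation k G V) (ρ' : Representation k G V') (φ : V →ₗ[k] V') : Prop :=
  ∀ σ : G, φ ∘ₗ ρ σ = ρ' σ ∘ₗ φ

/-- `ρ'` is (isomorphic to) a direct summand of `ρ`. -/
def IsSummand {V V' : Type u} [AddCommGroup V] [Module k V] [AddCommGroup V'] [Module k V']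
    (ρ : Representation k G V) (ρ' : Representation k G V') : Prop :=
  ∃ (i : V' →ₗ[k] V) (p : V →ₗ[k] V'),
    IsEquivariant ρ' ρ i ∧ IsEquivariant ρ ρ' p ∧ p ∘ₗ i = LinearMap.id

/-- An indecomposable representation: nonzero, and the only equivariant idempotents
are `0` and `id`. -/
def IsIndecomposable {V : Type u} [AddCommGroup V] [Module k V]
    (ρ : Representation k G V) : Prop :=
  Nontrivial V ∧
    ∀ e : V →ₗ[k] V, IsEquivariant ρ ρ e → e ∘ₗ e = e → e = 0 ∨ e = LinearMap.id

end

section Aux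

variable {k : Type u} [Field k] {G : Type u} [Group G]

theorem IsEquivariant.comp {V₁ V₂ V₃ : Type u}
    [AddCommGroup V₁] [Module k V₁] [AddCommGroup V₂] [Module k V₂]
    [AddCommGroup V₃] [Module k V₃]
    {ρ₁ : Representation k G V₁} {ρ₂ : Representation k G V₂} {ρ₃ : Representation k G V₃}
    {φ : V₂ →ₗ[k] V₃} {ψ : V₁ →ₗ[k] V₂}
    (hφ : IsEquivariant ρ₂ ρ₃ φ) (hψ : IsEquivariant ρ₁ ρ₂ ψ) :
    IsEquivariant ρ₁ ρ₃ (φ ∘ₗ ψ) := by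
  intro σ
  rw [LinearMap.comp_assoc, hψ σ, ← LinearMap.comp_assoc, hφ σ, LinearMap.comp_assoc]

/-- The restriction of a representation to an invariant submodule. -/
def subRep {V : Type u} [AddCommGroup V] [Module k V] (ρ : Representation k G V)
    (p : Submodule k V) (hp : ∀ σ : G, ∀ x ∈ p, ρ σ x ∈ p) : Representation k G p where
  toFun σ := (ρ σ).restrict (hp σ)
  map_one' := by
    ext x
    simp [LinearMap.restrict_apply]
  map_mul' := by
    intro σ τ
    ext x
    simp [LinearMap.restrict_apply, map_mul ρ σ τ]

/-- A piece of a decomposition of `ρ` into indecomposable direct summands. -/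
structure Piece {V : Type u} [AddCommGroup V] [Module k V]
    (ρ : Representation k G V) : Type (u + 1) where
  carrier : Type u
  [acg : AddCommGroup carrier]
  [mod : Module k carrier]
  [fd : FiniteDimensional k carrier]
  rep : Representation k G carrier
  incl : carrier →ₗ[k] V
  proj : V →ₗ[k] carrier
  hincl : IsEquivariant rep ρ incl
  hproj : IsEquivariant ρ rep proj
  hpi : proj ∘ₗ incl = LinearMap.id
  hind : IsIndecomposable rep

attribute [instance] Piece.acg Piece.mod Piece.fd

/-- Transport a piece of a direct summand to a piece of the big module. -/
def Piece.map {V W : Type u} [AddCommGroup V] [Module k V] [AddCommGroup W] [Module k W]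
    {ρ : Representation k G V} {ρ' : Representation k G W}
    (P : Piece ρ') (i : W →ₗ[k] V) (q : V →ₗ[k] W)
    (hi : IsEquivariant ρ' ρ i) (hq : IsEquivariant ρ ρ' q)
    (hqi : q ∘ₗ i = LinearMap.id) : Piece ρ where
  carrier := P.carrier
  rep := P.rep
  incl := i ∘ₗ P.incl
  proj := P.proj ∘ₗ q
  hincl := hi.comp P.hincl
  hproj := P.hproj.comp hq
  hpi := by
    ext x
    have h1 := LinearMap.congr_fun hqi (P.incl x)
    have h2 := LinearMap.congr_fun P.hpi x
    simp only [LinearMap.comp_apply, LinearMap.id_apply] at h1 h2 ⊢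
    rw [h1, h2]
  hind := P.hind

end Aux
section Aux2

variable {k : Type u} [Field k] {G : Type u} [Group G]

theorem idem_summand {V : Type u} [AddCommGroup V] [Module k V]
    (ρ : Representation k G V) (f : V →ₗ[k] V)
    (hfeq : IsEquivariant ρ ρ f) (hf : f ∘ₗ f = f) :
    ∃ (ρ' : Representation k G (LinearMap.range f))
      (i : (LinearMap.range f) →ₗ[k] V) (q : V →ₗ[k] (LinearMap.range f)),
      IsEquivariant ρ' ρ i ∧ IsEquivariant ρ ρ' q ∧ q ∘ₗ i = LinearMap.id ∧
        i ∘ₗ q = f := by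
  have hinv : ∀ σ : G, ∀ x ∈ LinearMap.range f, ρ σ x ∈ LinearMap.range f := by
    rintro σ _ ⟨y, rfl⟩
    exact ⟨ρ σ y, by simpa using LinearMap.congr_fun (hfeq σ) y⟩
  refine ⟨subRep ρ _ hinv, (LinearMap.range f).subtype,
    f.codRestrict _ (fun x => LinearMap.mem_range_self f x), ?_, ?_, ?_, ?_⟩
  · intro σ
    ext x
    simp [subRep, LinearMap.restrict_apply]
  · intro σ
    ext x
    simpa [subRep, LinearMap.restrict_apply] using LinearMap.congr_fun (hfeq σ) x
  · ext x
    obtain ⟨y, hy⟩ := x.2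
    have : f (x : V) = (x : V) := by
      rw [← hy]
      simpa using LinearMap.congr_fun hf y
    simp [this]
  · ext x
    simp

end Aux2
section Aux3

variable {k : Type u} [Field k] {G : Type u} [Group G]

theorem exists_pieces_aux (n : ℕ) :
    ∀ (V : Type u) (_ : AddCommGroup V) (_ : Module k V)
      (_ : FiniteDimensional k V) (ρ : Representation k G V),
      Module.finrank k V = n →
      ∃ (m : ℕ) (P : Fin m → Piece ρ),
        ∑ j, (P j).incl ∘ₗ (P j).proj = LinearMap.id := by
  induction n using Nat.strong_induction_on with
  | _ n ih =>
    intro V _ _ _ ρ hn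
    by_cases hs : Subsingleton V
    · refine ⟨0, Fin.elim0, ?_⟩
      ext x
      exact Subsingleton.elim _ _
    · have hnt : Nontrivial V := not_subsingleton_iff_nontrivial.mp hs
      by_cases hind : IsIndecomposable ρ
      · refine ⟨1, fun _ =>
          { carrier := V, rep := ρ, incl := LinearMap.id, proj := LinearMap.id,
            hincl := fun σ => by simp, hproj := fun σ => by simp,
            hpi := by simp, hind := hind }, by simp⟩
      · have h2 : ¬ ∀ e : V →ₗ[k] V, IsEquivariant ρ ρ e → e ∘ₗ e = e →
            e = 0 ∨ e = LinearMap.id := fun h => hind ⟨hnt, h⟩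
        push_neg at h2
        obtain ⟨e, heq, hid, hne0, hneid⟩ := h2
        have heq' : IsEquivariant ρ ρ (LinearMap.id - e) := by
          intro σ
          simp only [LinearMap.sub_comp, LinearMap.comp_sub, LinearMap.id_comp,
            LinearMap.comp_id, heq σ]
        have hid' : (LinearMap.id - e) ∘ₗ (LinearMap.id - e) = LinearMap.id - e := by
          simp only [LinearMap.sub_comp, LinearMap.comp_sub, LinearMap.id_comp,
            LinearMap.comp_id, hid]
          abel
        obtain ⟨ρp, i, q, hi, hq, hqi, hiq⟩ := idem_summand ρ e heq hid
        obtain ⟨ρp', i', q', hi', hq', hqi', hiq'⟩ :=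
          idem_summand ρ (LinearMap.id - e) heq' hid'
        -- rank bookkeeping
        have hker : LinearMap.range (LinearMap.id - e) = LinearMap.ker e := by
          ext x
          constructor
          · rintro ⟨y, rfl⟩
            have := LinearMap.congr_fun hid y
            simp only [LinearMap.comp_apply] at this
            simp [map_sub, this]
          · intro hx
            exact ⟨x, by simp [LinearMap.mem_ker.mp hx]⟩
        have hsumrank : Module.finrank k (LinearMap.range e) +
            Module.finrank k (LinearMap.range (LinearMap.id - e)) = n := by
          rw [hker, ← hn]
          exact LinearMap.finrank_range_add_finrank_ker e
        have hpos : 0 < Module.finrank k (LinearMap.range e) := by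
          rcases Nat.eq_zero_or_pos (Module.finrank k (LinearMap.range e)) with h | h
          · exact absurd (LinearMap.range_eq_bot.mp (Submodule.finrank_eq_zero.mp h)) hne0
          · exact h
        have hpos' : 0 < Module.finrank k (LinearMap.range (LinearMap.id - e)) := by
          rcases Nat.eq_zero_or_pos
            (Module.finrank k (LinearMap.range (LinearMap.id - e))) with h | h
          · have := LinearMap.range_eq_bot.mp (Submodule.finrank_eq_zero.mp h)
            exact absurd (by rw [sub_eq_zero] at this; exact this.symm) hneid
          · exact h
        obtain ⟨m₁, P₁, hsum₁⟩ := ih (Module.finrank k (LinearMap.range e))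
          (by omega) _ inferInstance inferInstance inferInstance ρp rfl
        obtain ⟨m₂, P₂, hsum₂⟩ := ih (Module.finrank k (LinearMap.range (LinearMap.id - e)))
          (by omega) _ inferInstance inferInstance inferInstance ρp' rfl
        refine ⟨m₁ + m₂, Fin.append (fun j => (P₁ j).map i q hi hq hqi)
          (fun j => (P₂ j).map i' q' hi' hq' hqi'), ?_⟩
        rw [Fin.sum_univ_add]
        have happ1 : ∀ j : Fin m₁, Fin.append (fun j => (P₁ j).map i q hi hq hqi)
            (fun j => (P₂ j).map i' q' hi' hq' hqi') (Fin.castAdd m₂ j)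
            = (P₁ j).map i q hi hq hqi := fun j => Fin.append_left _ _ j
        have happ2 : ∀ j : Fin m₂, Fin.append (fun j => (P₁ j).map i q hi hq hqi)
            (fun j => (P₂ j).map i' q' hi' hq' hqi') (Fin.natAdd m₁ j)
            = (P₂ j).map i' q' hi' hq' hqi' := fun j => Fin.append_right _ _ j
        have eq1 : (∑ j : Fin m₁,
              (Fin.append (fun j => (P₁ j).map i q hi hq hqi)
                (fun j => (P₂ j).map i' q' hi' hq' hqi') (Fin.castAdd m₂ j)).incl ∘ₗ
              (Fin.append (fun j => (P₁ j).map i q hi hq hqi)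
                (fun j => (P₂ j).map i' q' hi' hq' hqi') (Fin.castAdd m₂ j)).proj)
            = ∑ j : Fin m₁, (i ∘ₗ (P₁ j).incl) ∘ₗ ((P₁ j).proj ∘ₗ q) := by
          refine Finset.sum_congr rfl fun j _ => ?_
          rw [happ1 j]
          rfl
        have eq2 : (∑ j : Fin m₂,
              (Fin.append (fun j => (P₁ j).map i q hi hq hqi)
                (fun j => (P₂ j).map i' q' hi' hq' hqi') (Fin.natAdd m₁ j)).incl ∘ₗ
              (Fin.append (fun j => (P₁ j).map i q hi hq hqi)
                (fun j => (P₂ j).map i' q' hi' hq' hqi') (Fin.natAdd m₁ j)).proj)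
            = ∑ j : Fin m₂, (i' ∘ₗ (P₂ j).incl) ∘ₗ ((P₂ j).proj ∘ₗ q') := by
          refine Finset.sum_congr rfl fun j _ => ?_
          rw [happ2 j]
          rfl
        rw [eq1, eq2]
        ext x
        simp only [LinearMap.add_apply, LinearMap.sum_apply, LinearMap.comp_apply,
          LinearMap.id_apply]
        have h1 := LinearMap.congr_fun hsum₁ (q x)
        have h2 := LinearMap.congr_fun hsum₂ (q' x)
        simp only [LinearMap.sum_apply, LinearMap.comp_apply, LinearMap.id_apply] at h1 h2
        rw [← map_sum i, ← map_sum i', h1, h2]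
        have h3 := LinearMap.congr_fun hiq x
        have h4 := LinearMap.congr_fun hiq' x
        simp only [LinearMap.comp_apply, LinearMap.sub_apply, LinearMap.id_apply] at h3 h4
        rw [h3, h4]
        abel

theorem exists_pieces (V : Type u) [AddCommGroup V] [Module k V]
    [FiniteDimensional k V] (ρ : Representation k G V) :
    ∃ (m : ℕ) (P : Fin m → Piece ρ),
      ∑ j, (P j).incl ∘ₗ (P j).proj = LinearMap.id :=
  exists_pieces_aux (Module.finrank k V) V ‹_› ‹_› ‹_› ρ rfl

end Aux3
section Aux4

variable {k : Type u} [Field k] {G : Type u} [Group G] [Fintype G] [DecidableEq G]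

/-- The `H`-equivariant section `W → Ind_H^G Res_H W`, supported on `H`. -/
noncomputable def uMap (H : Subgroup G) {W : Type u} [AddCommGroup W] [Module k W]
    (ρ : Representation k G W) : W →ₗ[k] IndCarrier H (ρ.comp H.subtype) :=
  letI : DecidablePred (· ∈ H) := fun _ => Classical.propDecidable _
  { toFun := fun w => ⟨fun x => if x ∈ H then ρ x⁻¹ w else 0, by
      intro g h
      dsimp only
      by_cases hg : g ∈ H
      · rw [if_pos hg, if_pos (mul_mem hg h.2)]
        show ρ (g * (h : G))⁻¹ w = ρ ((H.subtype) h⁻¹) (ρ g⁻¹ w)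
        rw [mul_inv_rev, map_mul]
        rfl
      · rw [if_neg hg, if_neg (fun hgh => hg (by simpa using mul_mem hgh (inv_mem h.2))),
          map_zero]⟩
    map_add' := by
      intro w₁ w₂
      apply Subtype.ext
      funext x
      by_cases hx : x ∈ H <;> simp [hx]
    map_smul' := by
      intro c w
      apply Subtype.ext
      funext x
      by_cases hx : x ∈ H <;> simp [hx] }

theorem uMap_apply_mem (H : Subgroup G) {W : Type u} [AddCommGroup W] [Module k W]
    (ρ : Representation k G W) (w : W) {x : G} (hx : x ∈ H) :
    ((uMap H ρ w : IndCarrier H (ρ.comp H.subtype)) : G → W) x = ρ x⁻¹ w := by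
  simp [uMap, hx]

theorem uMap_apply_not_mem (H : Subgroup G) {W : Type u} [AddCommGroup W] [Module k W]
    (ρ : Representation k G W) (w : W) {x : G} (hx : x ∉ H) :
    ((uMap H ρ w : IndCarrier H (ρ.comp H.subtype)) : G → W) x = 0 := by
  simp [uMap, hx]

theorem uMap_equiv (H : Subgroup G) {W : Type u} [AddCommGroup W] [Module k W]
    (ρ : Representation k G W) (h : H) (w : W) :
    uMap H ρ (ρ ((h : G))⁻¹ w) =
      indRep H (ρ.comp H.subtype) ((h : G))⁻¹ (uMap H ρ w) := by
  apply Subtype.ext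
  funext x
  have : ((indRep H (ρ.comp H.subtype) ((h : G))⁻¹ (uMap H ρ w) :
      IndCarrier H (ρ.comp H.subtype)) : G → W) x
      = ((uMap H ρ w : IndCarrier H (ρ.comp H.subtype)) : G → W) ((h : G) * x) := by
    simp [indRep]
  rw [this]
  by_cases hx : x ∈ H
  · rw [uMap_apply_mem H ρ w (mul_mem h.2 hx), uMap_apply_mem H ρ _ hx,
      mul_inv_rev, map_mul]
    rfl
  · rw [uMap_apply_not_mem H ρ w (fun hq => hx (by simpa using mul_mem (inv_mem h.2) hq)),
      uMap_apply_not_mem H ρ _ hx]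

/-- Key computation: the relative trace of `uMap` is the identity on the induced module. -/
theorem key_sum (H : Subgroup G) {W : Type u} [AddCommGroup W] [Module k W]
    (ρ : Representation k G W) (f : IndCarrier H (ρ.comp H.subtype)) (x : G) :
    letI : Fintype (G ⧸ H) := Fintype.ofFinite _
    ∑ c : G ⧸ H, ((indRep H (ρ.comp H.subtype) (Quotient.out c)
        (uMap H ρ ((f : G → W) (Quotient.out c))) :
        IndCarrier H (ρ.comp H.subtype)) : G → W) x = (f : G → W) x := by
  letI : Fintype (G ⧸ H) := Fintype.ofFinite _
  have hterm : ∀ c : G ⧸ H,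
      ((indRep H (ρ.comp H.subtype) (Quotient.out c)
        (uMap H ρ ((f : G → W) (Quotient.out c))) :
        IndCarrier H (ρ.comp H.subtype)) : G → W) x
      = ((uMap H ρ ((f : G → W) (Quotient.out c)) :
          IndCarrier H (ρ.comp H.subtype)) : G → W) ((Quotient.out c)⁻¹ * x) := by
    intro c
    simp [indRep]
  rw [Finset.sum_congr rfl (fun c _ => hterm c)]
  rw [Finset.sum_eq_single (QuotientGroup.mk x : G ⧸ H)]
  · set σ := Quotient.out (QuotientGroup.mk x : G ⧸ H) with hσ
    have hmem : σ⁻¹ * x ∈ H := by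
      rw [← QuotientGroup.eq]
      exact QuotientGroup.out_eq' (QuotientGroup.mk x : G ⧸ H)
    rw [uMap_apply_mem H ρ _ hmem]
    have hx : x = σ * ((⟨σ⁻¹ * x, hmem⟩ : H) : G) := by simp
    have := f.2 σ ⟨σ⁻¹ * x, hmem⟩
    rw [← hx] at this
    rw [this]
    show ρ ((H.subtype) ⟨σ⁻¹ * x, hmem⟩⁻¹) _ = _
    simp [mul_inv_rev]
  · intro c _ hc
    apply uMap_apply_not_mem
    intro hmem
    apply hc
    have h1 : (QuotientGroup.mk (Quotient.out c) : G ⧸ H) = QuotientGroup.mk x :=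
      QuotientGroup.eq.mpr hmem
    exact (QuotientGroup.out_eq' c).symm.trans h1
  · intro hx
    exact absurd (Finset.mem_univ _) hx

end Aux4
theorem stmt_4 (k : Type u) [Field k] (G : Type u) [Group G] [Fintype G] [DecidableEq G]
    (H : Subgroup G)
    (W₁ W₂ W₃ : Type u)
    [AddCommGroup W₁] [Module k W₁] [FiniteDimensional k W₁]
    [AddCommGroup W₂] [Module k W₂] [FiniteDimensional k W₂]
    [AddCommGroup W₃] [Module k W₃] [FiniteDimensional k W₃]
    (ρ₁ : Representation k G W₁) (ρ₂ : Representation k G W₂) (ρ₃ : Representation k G W₃)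
    (hsummand : ∀ (V : Type u) (_ : AddCommGroup V) (_ : Module k V)
      (_ : FiniteDimensional k V) (ρ : Representation k G V),
      IsIndecomposable ρ → IsSummand (indRep H (ρ₃.comp H.subtype)) ρ → IsSummand ρ₂ ρ)
    (φ : W₁ →ₗ[k] IndCarrier H (ρ₃.comp H.subtype))
    (hφ : IsEquivariant ρ₁ (indRep H (ρ₃.comp H.subtype)) φ) :
    ∃ (n : ℕ) (f : Fin n → (W₂ →ₗ[k] IndCarrier H (ρ₃.comp H.subtype)))
      (g : Fin n → (W₁ →ₗ[k] IndCarrier H (ρ₂.comp H.subtype))),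
      (∀ i, IsEquivariant ρ₂ (indRep H (ρ₃.comp H.subtype)) (f i)) ∧
      (∀ i, IsEquivariant ρ₁ (indRep H (ρ₂.comp H.subtype)) (g i)) ∧
      φ = ∑ i, (f i) ∘ₗ (counitProj H ρ₂) ∘ₗ (g i) := by
  obtain ⟨m, P, hsum⟩ := exists_pieces (IndCarrier H (ρ₃.comp H.subtype))
    (indRep H (ρ₃.comp H.subtype))
  choose a b hab using fun j : Fin m =>
    hsummand (P j).carrier inferInstance inferInstance inferInstance (P j).rep (P j).hind
      ⟨(P j).incl, (P j).proj, (P j).hincl, (P j).hproj, (P j).hpi⟩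
  have ha : ∀ j, IsEquivariant (P j).rep ρ₂ (a j) := fun j => (hab j).1
  have hb : ∀ j, IsEquivariant ρ₂ (P j).rep (b j) := fun j => (hab j).2.1
  have hba : ∀ j, (b j) ∘ₗ (a j) = LinearMap.id := fun j => (hab j).2.2
  have hptw : ∀ z, ∑ j, (P j).incl ((P j).proj z) = z := by
    intro z
    have h := LinearMap.congr_fun hsum z
    simpa using h
  -- the maps g j
  have gval : ∀ (j : Fin m) (v : W₁),
      (fun x : G => a j ((P j).proj (uMap H ρ₃ ((φ v : G → W₃) x))))
        ∈ IndCarrier H (ρ₂.comp H.subtype) := by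
    intro j v x h
    have h1 : (φ v : G → W₃) (x * (h : G)) = ρ₃ ((h : G))⁻¹ ((φ v : G → W₃) x) := by
      have := (φ v).2 x h
      rw [this]
      rfl
    dsimp only
    rw [h1, uMap_equiv H ρ₃ h]
    have h2 := LinearMap.congr_fun ((P j).hproj ((h : G))⁻¹)
      (uMap H ρ₃ ((φ v : G → W₃) x))
    simp only [LinearMap.comp_apply] at h2
    rw [h2]
    have h3 := LinearMap.congr_fun (ha j ((h : G))⁻¹)
      ((P j).proj (uMap H ρ₃ ((φ v : G → W₃) x)))
    simp only [LinearMap.comp_apply] at h3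
    rw [h3]
    rfl
  let g : Fin m → (W₁ →ₗ[k] IndCarrier H (ρ₂.comp H.subtype)) := fun j =>
    { toFun := fun v => ⟨fun x => a j ((P j).proj (uMap H ρ₃ ((φ v : G → W₃) x))), gval j v⟩
      map_add' := by
        intro v₁ v₂
        apply Subtype.ext
        funext x
        simp [map_add]
      map_smul' := by
        intro c v
        apply Subtype.ext
        funext x
        simp [map_smul] }
  let f : Fin m → (W₂ →ₗ[k] IndCarrier H (ρ₃.comp H.subtype)) := fun j =>
    (P j).incl ∘ₗ b j
  have hf : ∀ j, IsEquivariant ρ₂ (indRep H (ρ₃.comp H.subtype)) (f j) :=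
    fun j => (P j).hincl.comp (hb j)
  have hg : ∀ j, IsEquivariant ρ₁ (indRep H (ρ₂.comp H.subtype)) (g j) := by
    intro j σ
    apply LinearMap.ext
    intro v
    apply Subtype.ext
    funext x
    show a j ((P j).proj (uMap H ρ₃ ((φ (ρ₁ σ v) : G → W₃) x))) = _
    have h1 : φ (ρ₁ σ v) = indRep H (ρ₃.comp H.subtype) σ (φ v) := by
      have := LinearMap.congr_fun (hφ σ) v
      simpa using this
    rw [h1]
    rfl
  refine ⟨m, f, g, hf, hg, ?_⟩
  letI : Fintype (G ⧸ H) := Fintype.ofFinite _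
  apply LinearMap.ext
  intro v
  have hstep : ∀ j, f j (counitProj H ρ₂ (g j v))
      = ∑ c : G ⧸ H, indRep H (ρ₃.comp H.subtype) (Quotient.out c)
          ((P j).incl ((P j).proj (uMap H ρ₃ ((φ v : G → W₃) (Quotient.out c))))) := by
    intro j
    have hπ : counitProj H ρ₂ (g j v)
        = ∑ c : G ⧸ H, ρ₂ (Quotient.out c)
            ((g j v : G → W₂) (Quotient.out c)) := rfl
    show (P j).incl (b j (counitProj H ρ₂ (g j v))) = _
    rw [hπ, map_sum, map_sum]
    refine Finset.sum_congr rfl fun c _ => ?_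
    have hgv : (g j v : G → W₂) (Quotient.out c)
        = a j ((P j).proj (uMap H ρ₃ ((φ v : G → W₃) (Quotient.out c)))) := rfl
    rw [hgv]
    have h1 := LinearMap.congr_fun (hb j (Quotient.out c))
      (a j ((P j).proj (uMap H ρ₃ ((φ v : G → W₃) (Quotient.out c)))))
    simp only [LinearMap.comp_apply] at h1
    rw [h1]
    have h2 := LinearMap.congr_fun (hba j)
      ((P j).proj (uMap H ρ₃ ((φ v : G → W₃) (Quotient.out c))))
    simp only [LinearMap.comp_apply, LinearMap.id_apply] at h2
    rw [h2]
    have h3 := LinearMap.congr_fun ((P j).hincl (Quotient.out c))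
      ((P j).proj (uMap H ρ₃ ((φ v : G → W₃) (Quotient.out c))))
    simp only [LinearMap.comp_apply] at h3
    rw [h3]
  have hRHS : (∑ j, (f j) ∘ₗ (counitProj H ρ₂) ∘ₗ (g j)) v
      = ∑ c : G ⧸ H, indRep H (ρ₃.comp H.subtype) (Quotient.out c)
          (uMap H ρ₃ ((φ v : G → W₃) (Quotient.out c))) := by
    rw [LinearMap.sum_apply]
    simp only [LinearMap.comp_apply]
    rw [Finset.sum_congr rfl fun j _ => hstep j, Finset.sum_comm]
    refine Finset.sum_congr rfl fun c _ => ?_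
    rw [← map_sum, hptw]
  rw [hRHS]
  apply Subtype.ext
  funext x
  have hcoe : ((∑ c : G ⧸ H, indRep H (ρ₃.comp H.subtype) (Quotient.out c)
      (uMap H ρ₃ ((φ v : G → W₃) (Quotient.out c))) :
      IndCarrier H (ρ₃.comp H.subtype)) : G → W₃) x
      = ∑ c : G ⧸ H, ((indRep H (ρ₃.comp H.subtype) (Quotient.out c)
          (uMap H ρ₃ ((φ v : G → W₃) (Quotient.out c))) :
          IndCarrier H (ρ₃.comp H.subtype)) : G → W₃) x := by
    have := map_sum ((LinearMap.proj x : (G → W₃) →ₗ[k] W₃) ∘ₗ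
      (IndCarrier H (ρ₃.comp H.subtype)).subtype)
      (fun c : G ⧸ H => indRep H (ρ₃.comp H.subtype) (Quotient.out c)
        (uMap H ρ₃ ((φ v : G → W₃) (Quotient.out c)))) Finset.univ
    simpa using this
  rw [hcoe]
  exact (key_sum H ρ₃ (φ v) x).symm
end

section
/- Let A be a (possibly noncommutative) ring, N a right A-module, V a left A-module, and a : N → A a right A-module homomorphism. Assume the map N ⊗ N → N, x ⊗ y ↦ x · a(y), is surjective. Then N ⊗_A V = 0 if and only if for all x ∈ N and v ∈ V, a(x) · v = 0 (i.e. the composite N → A → End(V) is zero). -/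
universe u v w

/-- `N ⊗_A V = 0` for a right `A`-module `N` and a left `A`-module `V`, expressed via the
universal property of the balanced tensor product over the (possibly noncommutative) ring `A`:
every `A`-balanced biadditive map out of `N × V` is zero. -/
def TensorOverIsZero (A : Type u) (N : Type v) (V : Type w) [Ring A]
    [AddCommGroup N] [Module Aᵐᵒᵖ N] [AddCommGroup V] [Module A V] : Prop :=
  ∀ (P : Type (max v w)) (_ : AddCommGroup P) (β : N →+ V →+ P),
    (∀ (x : N) (r : A) (v : V), β (MulOpposite.op r • x) v = β x (r • v)) → β = 0

theorem stmt_5 (A : Type u) (N : Type v) (V : Type w) [Ring A]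
    [AddCommGroup N] [Module Aᵐᵒᵖ N] [AddCommGroup V] [Module A V]
    (a : N →ₗ[Aᵐᵒᵖ] A)
    (hsurj : ∀ z : N,
      z ∈ AddSubgroup.closure {n : N | ∃ x y : N, n = MulOpposite.op (a y) • x}) :
    TensorOverIsZero A N V ↔ ∀ (x : N) (v : V), a x • v = 0 := by
  constructor
  · intro hT x v
    let inner : N → V →+ ULift.{v} V := fun x =>
      AddMonoidHom.mk' (fun v => ULift.up (a x • v)) (by
        intro v w; apply ULift.ext; simp [smul_add])
    let β : N →+ V →+ ULift.{v} V := AddMonoidHom.mk' inner (by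
      intro x y; ext v; show a (x + y) • v = a x • v + a y • v; rw [map_add, add_smul])
    have hbal : ∀ (x : N) (r : A) (v : V), β (MulOpposite.op r • x) v = β x (r • v) := by
      intro x r v
      apply ULift.ext
      show a (MulOpposite.op r • x) • v = a x • (r • v)
      rw [map_smul, MulOpposite.smul_eq_mul_unop, MulOpposite.unop_op, mul_smul]
    have h0 := hT (ULift.{v} V) inferInstance β hbal
    have := congrArg ULift.down (congrFun (congrArg DFunLike.coe
      (congrFun (congrArg DFunLike.coe h0) x)) v)
    simpa [β, inner] using this
  · intro h P _ β hbal
    ext x v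
    refine AddSubgroup.closure_induction ?_ ?_ ?_ ?_ (hsurj x)
    · rintro z ⟨x', y, rfl⟩
      rw [hbal, h, map_zero]
      rfl
    · simp
    · intro z w _ _ hz hw; simp [hz, hw]
    · intro z _ hz; simp [hz]
end

section
/- Every partition λ admits a unique decomposition λ = μ + ν (componentwise sum) where μ is a 2-restricted partition (μᵢ − μᵢ₊₁ ≤ 1 for all i, with parts eventually 0) and ν is a partition all of whose parts are even. -/
/-- A partition, presented as a nonincreasing finitely supported sequence `ℕ → ℕ`. -/
def IsPartitionSeq (lam : ℕ → ℕ) : Prop :=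
  Antitone lam ∧ ∃ N : ℕ, ∀ n ≥ N, lam n = 0

/-- A 2-restricted partition: consecutive differences are 0 or 1. -/
def IsTwoRestricted (mu : ℕ → ℕ) : Prop :=
  ∀ i : ℕ, mu i - mu (i + 1) ≤ 1

theorem stmt_13 (lam : ℕ → ℕ) (hlam : IsPartitionSeq lam) :
    ∃! p : (ℕ → ℕ) × (ℕ → ℕ),
      IsPartitionSeq p.1 ∧ IsPartitionSeq p.2 ∧ IsTwoRestricted p.1 ∧
        (∀ i, 2 ∣ p.2 i) ∧ (∀ i, lam i = p.1 i + p.2 i) := by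
  obtain ⟨hanti, N, hN⟩ := hlam
  set d : ℕ → ℕ := fun j => lam j - lam (j + 1) with hd
  set mu : ℕ → ℕ := fun i => ∑ j ∈ Finset.Ico i N, d j % 2 with hmu
  set nu : ℕ → ℕ := fun i => ∑ j ∈ Finset.Ico i N, 2 * (d j / 2) with hnu
  have hmu0 : ∀ i, N ≤ i → mu i = 0 := by
    intro i hi
    have he : Finset.Ico i N = ∅ := Finset.Ico_eq_empty (by omega)
    simp [hmu, he]
  have hnu0 : ∀ i, N ≤ i → nu i = 0 := by
    intro i hi
    have he : Finset.Ico i N = ∅ := Finset.Ico_eq_empty (by omega)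
    simp [hnu, he]
  have hmurec : ∀ i, mu i = d i % 2 + mu (i + 1) := by
    intro i
    by_cases hi : i < N
    · simp only [hmu]
      rw [Finset.sum_eq_sum_Ico_succ_bot hi]
    · have h1 : lam i = 0 := hN i (by omega)
      have h2 : lam (i + 1) = 0 := hN (i + 1) (by omega)
      rw [hmu0 i (by omega), hmu0 (i + 1) (by omega)]
      simp [hd, h1, h2]
  have hnurec : ∀ i, nu i = 2 * (d i / 2) + nu (i + 1) := by
    intro i
    by_cases hi : i < N
    · simp only [hnu]
      rw [Finset.sum_eq_sum_Ico_succ_bot hi]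
    · have h1 : lam i = 0 := hN i (by omega)
      have h2 : lam (i + 1) = 0 := hN (i + 1) (by omega)
      rw [hnu0 i (by omega), hnu0 (i + 1) (by omega)]
      simp [hd, h1, h2]
  -- the decomposition identity
  have hfuel : ∀ m i, N ≤ i + m → lam i = mu i + nu i := by
    intro m
    induction m with
    | zero =>
      intro i hi
      rw [hmu0 i (by omega), hnu0 i (by omega), hN i (by omega)]
    | succ m ih =>
      intro i hi
      by_cases h : N ≤ i
      · rw [hmu0 i h, hnu0 i h, hN i h]
      · have hstep := ih (i + 1) (by omega)
        have hle : lam (i + 1) ≤ lam i := hanti (by omega)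
        rw [hmurec i, hnurec i]
        have hdi : d i = lam i - lam (i + 1) := rfl
        omega
  have hdecomp : ∀ i, lam i = mu i + nu i := fun i => hfuel N i (by omega)
  refine ⟨(mu, nu), ⟨⟨?_, N, fun n hn => hmu0 n hn⟩, ⟨?_, N, fun n hn => hnu0 n hn⟩,
    ?_, ?_, hdecomp⟩, ?_⟩
  · show Antitone mu
    exact antitone_nat_of_succ_le fun n => by have := hmurec n; omega
  · show Antitone nu
    exact antitone_nat_of_succ_le fun n => by have := hnurec n; omega
  · show IsTwoRestricted mu
    intro i
    have h1 := hmurec i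
    have h2 : d i % 2 < 2 := Nat.mod_lt _ (by omega)
    omega
  · intro i
    show 2 ∣ nu i
    simp only [hnu]
    exact Finset.dvd_sum fun j _ => dvd_mul_right 2 _
  · rintro ⟨f, g⟩ ⟨⟨hfa, Nf, hNf⟩, ⟨hga, Ng, hNg⟩, hres, heven, hsum⟩
    simp only [Prod.fst, Prod.snd] at hfa hNf hga hNg hres heven hsum
    have hfmu : ∀ i, f i = mu i := by
      have key : ∀ m i, max N (max Nf Ng) ≤ i + m → f i = mu i := by
        intro m
        induction m with
        | zero =>
          intro i hi
          rw [hmu0 i (by omega), hNf i (by omega)]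
        | succ m ih =>
          intro i hi
          by_cases h : max N (max Nf Ng) ≤ i
          · rw [hmu0 i (by omega), hNf i (by omega)]
          · have hstep := ih (i + 1) (by omega)
            have h1 := hsum i
            have h2 := hsum (i + 1)
            have h3 : f (i + 1) ≤ f i := hfa (by omega)
            have h4 : g (i + 1) ≤ g i := hga (by omega)
            have h5 := hres i
            have h6 := heven i
            have h7 := heven (i + 1)
            have h8 : lam (i + 1) ≤ lam i := hanti (by omega)
            have h9 := hmurec i
            have h10 : d i = lam i - lam (i + 1) := rfl
            omega
      intro i
      exact key (max N (max Nf Ng)) i (by omega)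
    have hf : f = mu := funext hfmu
    subst hf
    have hg : g = nu := funext fun i => by
      have := hsum i; have := hdecomp i; omega
    subst hg
    rfl
end

section
/- Let k be a field of characteristic 2 and A a k-algebra with derivation δ satisfying δ² = 0 and ab = ba + δ(a)δ(b). For n × n matrices D (invertible) and E with entries in A, one has the block factorization [[D, D'],[E, D + E']] = [[Iₙ, 0],[ED⁻¹, Iₙ + (ED⁻¹)']] · [[D, D'],[0, D]], where M' denotes the matrix obtained by applying δ entrywise. -/
theorem stmt_15 (k : Type*) [Field k] [CharP k 2]
    (A : Type*) [Ring A] [Algebra k A] (δ : A →ₗ[k] A)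
    (hleib : ∀ a b : A, δ (a * b) = δ a * b + a * δ b)
    (hsq : ∀ a : A, δ (δ a) = 0)
    (hcomm : ∀ a b : A, a * b = b * a + δ a * δ b)
    (n : ℕ) (D E Dinv : Matrix (Fin n) (Fin n) A)
    (hD1 : D * Dinv = 1) (hD2 : Dinv * D = 1) :
    Matrix.fromBlocks D (D.map δ) E (D + E.map δ)
      = Matrix.fromBlocks (1 : Matrix (Fin n) (Fin n) A) 0
          (E * Dinv) (1 + (E * Dinv).map δ)
        * Matrix.fromBlocks D (D.map δ) 0 D := by
  -- characteristic 2 in A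
  have h2 : (2 : A) = 0 := by
    have h2k : (2 : k) = 0 := by
      have := CharP.cast_eq_zero k 2
      exact_mod_cast this
    have : (2 : A) = algebraMap k A (2 : k) := by
      rw [show (2 : A) = 1 + 1 by norm_num, show (2 : k) = 1 + 1 by norm_num,
        map_add, map_one]
    rw [this, h2k, map_zero]
  have hchar : ∀ x : A, x + x = 0 := fun x => by
    have : x + x = 2 * x := (two_mul x).symm
    rw [this, h2, zero_mul]
  -- matrix Leibniz
  have mleib : ∀ X Y : Matrix (Fin n) (Fin n) A,
      (X * Y).map δ = X.map δ * Y + X * Y.map δ := by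
    intro X Y
    ext i j
    simp [Matrix.map_apply, Matrix.mul_apply, hleib, Finset.sum_add_distrib]
  -- δ(1) = 0 entrywise
  have hδ1 : δ (1 : A) = 0 := by
    have h := hleib 1 1
    simp only [one_mul, mul_one] at h
    have := hchar (δ (1 : A))
    nth_rewrite 1 [h] at this
    rw [add_assoc,
      hchar (δ (1:A)), add_zero] at this
    exact this
  have hone : (1 : Matrix (Fin n) (Fin n) A).map δ = 0 := by
    ext i j
    by_cases h : i = j <;> simp [Matrix.one_apply, h, hδ1]
  have hDinv : Dinv.map δ * D + Dinv * D.map δ = 0 := by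
    have := mleib Dinv D
    rw [hD2, hone] at this
    exact this.symm
  have key : E * Dinv * D.map δ + (E * Dinv).map δ * D = E.map δ := by
    rw [mleib E Dinv]
    have hre : E * Dinv * D.map δ + (E.map δ * Dinv + E * Dinv.map δ) * D
        = E.map δ * (Dinv * D) + E * (Dinv.map δ * D + Dinv * D.map δ) := by
      noncomm_ring
    rw [hre, hDinv, hD2, Matrix.mul_zero, add_zero, Matrix.mul_one]
  have h22 : E * Dinv * D.map δ + (1 + (E * Dinv).map δ) * D = D + E.map δ := by
    rw [← key]
    noncomm_ring
  rw [Matrix.fromBlocks_multiply, Matrix.one_mul, Matrix.zero_mul, add_zero,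
    Matrix.one_mul, Matrix.zero_mul, add_zero, Matrix.mul_zero,
    Matrix.mul_assoc E Dinv D, hD2, Matrix.mul_one, add_zero, h22]
end
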